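/- For all X, Y ∈ 𝔥, in the block decomposition of κ(X,Y) ∈ M_{n+2}(ℝ) (block sizes 1, n, 1) all off-diagonal blocks vanish: the (1,2)-, (1,3)-, (2,1)-, (2,3)-, (3,1)- and (3,2)-blocks of κ(X,Y) are zero. (The curvature of the normal Cartan connection has vanishing 𝔤₋₁- and 𝔤₁-components, i.e. κ = κ_{𝔤₀}.) -/
import Mathlib


open Matrix

noncomputable section

/-- The sign `sgn(s')` of a (nonzero) real number. -/
def sgn (s' : ℝ) : ℝ := if 0 < s' then 1 else -1

/-- Index type of `ℝⁿ`, `n = p + q`. -/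
abbrev NIdx (p q : ℕ) := Fin p ⊕ Fin q

/-- Index type for block matrices of block sizes `1, n, 1` with `n = p + q`. -/
abbrev BigIdx (p q : ℕ) := (Fin 1 ⊕ (Fin p ⊕ Fin q)) ⊕ Fin 1

/-- Elements of `𝔥 = so(p+1) × so(q+1)`, written as pairs of `(1+p)`- and
`(1+q)`-indexed matrices. -/
abbrev HElt (p q : ℕ) :=
  Matrix (Fin 1 ⊕ Fin p) (Fin 1 ⊕ Fin p) ℝ × Matrix (Fin 1 ⊕ Fin q) (Fin 1 ⊕ Fin q) ℝ

/-- Membership in `𝔥 = so(p+1) × so(q+1)`: both components are skew-symmetric. -/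
def skewPair (p q : ℕ) (X : HElt p q) : Prop := X.1ᵀ = -X.1 ∧ X.2ᵀ = -X.2

/-- The componentwise commutator bracket of `𝔥 = so(p+1) × so(q+1)`. -/
def hBracket (p q : ℕ) (X Y : HElt p q) : HElt p q :=
  (X.1 * Y.1 - Y.1 * X.1, X.2 * Y.2 - Y.2 * X.2)

/-- `𝐠 = diag(I_p, ε I_q)`, `ε = sgn s'`. -/
def gMat (p q : ℕ) (s' : ℝ) : Matrix (NIdx p q) (NIdx p q) ℝ :=
  fromBlocks 1 0 0 (sgn s' • 1)

/-- `J = [[0,0,1],[0,𝐠,0],[1,0,0]]` (block sizes `1, n, 1`), so that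
`𝔤 = so(J) = {M : MᵗJ + JM = 0}`. -/
def JMat (p q : ℕ) (s' : ℝ) : Matrix (BigIdx p q) (BigIdx p q) ℝ :=
  fromBlocks
    (fromBlocks 0 0 0 (gMat p q s'))
    (Matrix.of fun i _ => Sum.elim (fun _ => (1 : ℝ)) (fun _ => 0) i)
    (Matrix.of fun _ j => Sum.elim (fun _ => (1 : ℝ)) (fun _ => 0) j)
    0

/-- The rho-tensor
`𝔸 = −(1/(2δ))((2sΔ+m)·diag(I_p,0) + (2s'Δ−m)·ε·diag(0,I_q))`, where
`δ = (n−1)(n−2)`, `Δ = (p−1)(q−1)`, `m = s·p(p−1) − s'·q(q−1)`, `ε = sgn s'`. -/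
def AMat (p q : ℕ) (s s' : ℝ) : Matrix (NIdx p q) (NIdx p q) ℝ :=
  (-(1 / (2 * (((p : ℝ) + (q : ℝ) - 1) * ((p : ℝ) + (q : ℝ) - 2))))) •
    ((2 * s * (((p : ℝ) - 1) * ((q : ℝ) - 1)) +
        (s * p * ((p : ℝ) - 1) - s' * q * ((q : ℝ) - 1))) •
      (fromBlocks 1 0 0 0 : Matrix (NIdx p q) (NIdx p q) ℝ) +
     ((2 * s' * (((p : ℝ) - 1) * ((q : ℝ) - 1)) -
        (s * p * ((p : ℝ) - 1) - s' * q * ((q : ℝ) - 1))) * sgn s') •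
      (fromBlocks 0 0 0 1 : Matrix (NIdx p q) (NIdx p q) ℝ))

/-- The `ℝᵐ`-component `v` of an element `[[0,−vᵗ],[v,A]]` of `so(m+1)`. -/
def vPart {m : ℕ} (P : Matrix (Fin 1 ⊕ Fin m) (Fin 1 ⊕ Fin m) ℝ) : Fin m → ℝ :=
  fun i => P (Sum.inr i) (Sum.inl 0)

/-- `x := (v/√s, w/√|s'|) ∈ ℝⁿ` for `X = (v ⊕ A₁, w ⊕ A₂) ∈ 𝔥`. -/
def xVec (p q : ℕ) (s s' : ℝ) (X : HElt p q) : NIdx p q → ℝ :=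
  Sum.elim (fun i => vPart X.1 i / Real.sqrt s) (fun j => vPart X.2 j / Real.sqrt |s'|)

/-- The invariant Cartan connection `α : 𝔥 → 𝔤`: for `X = (v ⊕ A₁, w ⊕ A₂)` and
`x = (v/√s, w/√|s'|)`, `α(X)` is the block matrix (block sizes `1, n, 1`) with
`(1,2)`-block `xᵗ𝔸`, `(2,1)`-block `x`, `(2,2)`-block `diag(A₁,A₂)`,
`(2,3)`-block `−𝐠𝔸x`, `(3,2)`-block `−xᵗ𝐠`, and all other blocks zero. -/
def alphaMap (p q : ℕ) (s s' : ℝ) (X : HElt p q) :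
    Matrix (BigIdx p q) (BigIdx p q) ℝ :=
  fromBlocks
    (fromBlocks 0
      (Matrix.of fun _ j => Matrix.vecMul (xVec p q s s' X) (AMat p q s s') j)
      (Matrix.of fun i _ => xVec p q s s' X i)
      (fromBlocks (toBlocks₂₂ X.1) 0 0 (toBlocks₂₂ X.2)))
    (Matrix.of fun i _ => Sum.elim (fun _ => (0 : ℝ))
      (fun k => -(Matrix.mulVec (gMat p q s' * AMat p q s s') (xVec p q s s' X) k)) i)
    (Matrix.of fun _ j => Sum.elim (fun _ => (0 : ℝ))
      (fun k => -(Matrix.vecMul (xVec p q s s' X) (gMat p q s') k)) j)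
    0

/-- The curvature `κ(X,Y) = [α(X),α(Y)] − α([X,Y])` of the Cartan connection `α`. -/
def kappaMap (p q : ℕ) (s s' : ℝ) (X Y : HElt p q) :
    Matrix (BigIdx p q) (BigIdx p q) ℝ :=
  alphaMap p q s s' X * alphaMap p q s s' Y - alphaMap p q s s' Y * alphaMap p q s s' X -
    alphaMap p q s s' (hBracket p q X Y)


namespace KA

section Generic
variable {n : Type*} [Fintype n]

lemma vecMul_skew (a : n → ℝ) (M : Matrix n n ℝ) (hM : Mᵀ = -M) :
    vecMul a M = -(M *ᵥ a) := by
  have : M = (-M)ᵀ := by rw [← hM, transpose_transpose]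
  rw [this, vecMul_transpose, neg_mulVec]
  simp [← hM]

lemma key_row (a b z : n → ℝ) (DX DY S : Matrix n n ℝ)
    (hDX : DXᵀ = -DX) (hDY : DYᵀ = -DY)
    (hSX : S * DX = DX * S) (hSY : S * DY = DY * S)
    (hz : z = DX *ᵥ b - DY *ᵥ a) :
    vecMul (vecMul a S) DY - vecMul (vecMul b S) DX - vecMul z S = 0 := by
  rw [vecMul_vecMul, vecMul_vecMul, hSY, hSX, ← vecMul_vecMul, ← vecMul_vecMul,
    vecMul_skew a DY hDY, vecMul_skew b DX hDX, hz]
  rw [← Matrix.sub_vecMul, ← Matrix.sub_vecMul]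
  rw [show -(DY *ᵥ a) - -(DX *ᵥ b) - (DX *ᵥ b - DY *ᵥ a) = 0 by abel]
  exact Matrix.zero_vecMul _

lemma key_col (a b z : n → ℝ) (DX DY S : Matrix n n ℝ)
    (hSX : S * DX = DX * S) (hSY : S * DY = DY * S)
    (hz : z = DX *ᵥ b - DY *ᵥ a) :
    -(DX *ᵥ (S *ᵥ b)) + DY *ᵥ (S *ᵥ a) + S *ᵥ z = 0 := by
  rw [mulVec_mulVec, mulVec_mulVec, ← hSX, ← hSY, ← mulVec_mulVec, ← mulVec_mulVec, hz,
    Matrix.mulVec_sub]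
  abel

lemma key_scal (a b : n → ℝ) (S : Matrix n n ℝ) (hS : Sᵀ = S) :
    vecMul a S ⬝ᵥ b = vecMul b S ⬝ᵥ a := by
  have h1 : vecMul a S = S *ᵥ a := by rw [← Matrix.mulVec_transpose, hS]
  have h2 : vecMul b S = S *ᵥ b := by rw [← Matrix.mulVec_transpose, hS]
  rw [h1, h2, dotProduct_comm, Matrix.dotProduct_mulVec, h2]

lemma key_scal' (a b : n → ℝ) (Am G : Matrix n n ℝ) (hAm : Amᵀ = Am) (hG : Gᵀ = G)
    (hc : G * Am = Am * G) :
    vecMul a Am ⬝ᵥ ((G * Am) *ᵥ b) = vecMul b Am ⬝ᵥ ((G * Am) *ᵥ a) := by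
  rw [Matrix.dotProduct_mulVec, Matrix.dotProduct_mulVec, vecMul_vecMul, vecMul_vecMul]
  refine key_scal a b (Am * (G * Am)) ?_
  rw [transpose_mul, transpose_mul, hAm, hG, Matrix.mul_assoc]

end Generic

def D (p q : ℕ) (X : HElt p q) : Matrix (NIdx p q) (NIdx p q) ℝ :=
  fromBlocks (toBlocks₂₂ X.1) 0 0 (toBlocks₂₂ X.2)

variable {p q : ℕ} {s s' : ℝ}

lemma P_comm (X : HElt p q) :
    (fromBlocks 1 0 0 0 : Matrix (NIdx p q) (NIdx p q) ℝ) * D p q X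
      = D p q X * (fromBlocks 1 0 0 0 : Matrix (NIdx p q) (NIdx p q) ℝ) := by
  simp [D, fromBlocks_multiply]

lemma Q_comm (X : HElt p q) :
    (fromBlocks 0 0 0 1 : Matrix (NIdx p q) (NIdx p q) ℝ) * D p q X
      = D p q X * (fromBlocks 0 0 0 1 : Matrix (NIdx p q) (NIdx p q) ℝ) := by
  simp [D, fromBlocks_multiply]

lemma A_comm (X : HElt p q) : AMat p q s s' * D p q X = D p q X * AMat p q s s' := by
  simp only [AMat, Matrix.smul_mul, Matrix.mul_smul, Matrix.add_mul, Matrix.mul_add,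
    P_comm, Q_comm]

lemma g_comm (X : HElt p q) : gMat p q s' * D p q X = D p q X * gMat p q s' := by
  simp [gMat, fromBlocks_multiply, D, Matrix.smul_mul, Matrix.mul_smul]

lemma A_transpose : (AMat p q s s')ᵀ = AMat p q s s' := by
  simp [AMat, fromBlocks_transpose]

lemma g_transpose : (gMat p q s')ᵀ = gMat p q s' := by
  simp [gMat, fromBlocks_transpose]

lemma gA_comm : gMat p q s' * AMat p q s s' = AMat p q s s' * gMat p q s' := by
  simp [gMat, AMat, fromBlocks_multiply, Matrix.smul_mul, Matrix.mul_smul, Matrix.mul_add,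
    Matrix.add_mul]

lemma gA_commD (X : HElt p q) :
    gMat p q s' * AMat p q s s' * D p q X = D p q X * (gMat p q s' * AMat p q s s') := by
  rw [Matrix.mul_assoc, A_comm, ← Matrix.mul_assoc, g_comm, Matrix.mul_assoc]

lemma D_transpose (X : HElt p q) (hX : skewPair p q X) : (D p q X)ᵀ = - D p q X := by
  ext i j
  rcases i with i | i <;> rcases j with j | j <;> simp [D, toBlocks₂₂, fromBlocks]
  · have := congrFun (congrFun hX.1 (Sum.inr i)) (Sum.inr j); simpa using this
  · have := congrFun (congrFun hX.2 (Sum.inr i)) (Sum.inr j); simpa using this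

lemma xVec_bracket (X Y : HElt p q) (hX : skewPair p q X) (hY : skewPair p q Y) :
    xVec p q s s' (hBracket p q X Y)
      = D p q X *ᵥ xVec p q s s' Y - D p q Y *ᵥ xVec p q s s' X := by
  have hX1 : X.1 (Sum.inl 0) (Sum.inl 0) = 0 := by
    have := congrFun (congrFun hX.1 (Sum.inl 0)) (Sum.inl 0); simp at this; linarith
  have hX2 : X.2 (Sum.inl 0) (Sum.inl 0) = 0 := by
    have := congrFun (congrFun hX.2 (Sum.inl 0)) (Sum.inl 0); simp at this; linarith
  have hY1 : Y.1 (Sum.inl 0) (Sum.inl 0) = 0 := by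
    have := congrFun (congrFun hY.1 (Sum.inl 0)) (Sum.inl 0); simp at this; linarith
  have hY2 : Y.2 (Sum.inl 0) (Sum.inl 0) = 0 := by
    have := congrFun (congrFun hY.2 (Sum.inl 0)) (Sum.inl 0); simp at this; linarith
  funext k
  rcases k with i | i <;>
    simp [xVec, hBracket, vPart, D, mulVec, dotProduct, Matrix.mul_apply,
      Fintype.sum_sum_type, fromBlocks, toBlocks₂₂, sub_div, Finset.sum_div, mul_div_assoc,
      hX1, hX2, hY1, hY2]

variable (X : HElt p q)

@[simp] lemma al11 (a a' : Fin 1) :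
    alphaMap p q s s' X (.inl (.inl a)) (.inl (.inl a')) = 0 := rfl
@[simp] lemma al12 (a : Fin 1) (k : NIdx p q) :
    alphaMap p q s s' X (.inl (.inl a)) (.inl (.inr k))
      = vecMul (xVec p q s s' X) (AMat p q s s') k := rfl
@[simp] lemma al13 (a b : Fin 1) : alphaMap p q s s' X (.inl (.inl a)) (.inr b) = 0 := rfl
@[simp] lemma al21 (k : NIdx p q) (a : Fin 1) :
    alphaMap p q s s' X (.inl (.inr k)) (.inl (.inl a)) = xVec p q s s' X k := rfl
@[simp] lemma al22 (k l : NIdx p q) :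
    alphaMap p q s s' X (.inl (.inr k)) (.inl (.inr l)) = D p q X k l := rfl
@[simp] lemma al23 (k : NIdx p q) (b : Fin 1) :
    alphaMap p q s s' X (.inl (.inr k)) (.inr b)
      = -((gMat p q s' * AMat p q s s') *ᵥ xVec p q s s' X) k := rfl
@[simp] lemma al31 (b a : Fin 1) : alphaMap p q s s' X (.inr b) (.inl (.inl a)) = 0 := rfl
@[simp] lemma al32 (b : Fin 1) (k : NIdx p q) :
    alphaMap p q s s' X (.inr b) (.inl (.inr k))
      = -(vecMul (xVec p q s s' X) (gMat p q s') k) := rfl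
@[simp] lemma al33 (b b' : Fin 1) : alphaMap p q s s' X (.inr b) (.inr b') = 0 := rfl

end KA

/-- **The curvature of the normal Cartan connection has vanishing `𝔤₋₁`- and
`𝔤₁`-components, i.e. `κ = κ_{𝔤₀}`:** in the block decomposition of
`κ(X,Y) ∈ M_{n+2}(ℝ)` (block sizes `1, n, 1`) all off-diagonal blocks, namely the
`(1,2)`-, `(1,3)`-, `(2,1)`-, `(2,3)`-, `(3,1)`- and `(3,2)`-blocks, vanish. -/
theorem kappa_off_diagonal_blocks_vanish (p q : ℕ) (hp : 1 ≤ p) (hq : 1 ≤ q)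
    (hn : 3 ≤ p + q) (s s' : ℝ) (hs : 0 < s) (hs' : s' ≠ 0)
    (X Y : HElt p q) (hX : skewPair p q X) (hY : skewPair p q Y) :
    -- (1,2)-block
    (∀ (a : Fin 1) (j : NIdx p q),
      kappaMap p q s s' X Y (Sum.inl (Sum.inl a)) (Sum.inl (Sum.inr j)) = 0) ∧
    -- (1,3)-block
    (∀ (a : Fin 1) (b : Fin 1),
      kappaMap p q s s' X Y (Sum.inl (Sum.inl a)) (Sum.inr b) = 0) ∧
    -- (2,1)-block
    (∀ (j : NIdx p q) (a : Fin 1),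
      kappaMap p q s s' X Y (Sum.inl (Sum.inr j)) (Sum.inl (Sum.inl a)) = 0) ∧
    -- (2,3)-block
    (∀ (j : NIdx p q) (b : Fin 1),
      kappaMap p q s s' X Y (Sum.inl (Sum.inr j)) (Sum.inr b) = 0) ∧
    -- (3,1)-block
    (∀ (b : Fin 1) (a : Fin 1),
      kappaMap p q s s' X Y (Sum.inr b) (Sum.inl (Sum.inl a)) = 0) ∧
    -- (3,2)-block
    (∀ (b : Fin 1) (j : NIdx p q),
      kappaMap p q s s' X Y (Sum.inr b) (Sum.inl (Sum.inr j)) = 0) := by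
  refine ⟨?_, ?_, ?_, ?_, ?_, ?_⟩
  · intro a j
    simp only [kappaMap, Matrix.sub_apply, Matrix.mul_apply, Fintype.sum_sum_type]
    simp
    have h := congrFun (KA.key_row (xVec p q s s' X) (xVec p q s s' Y)
      (xVec p q s s' (hBracket p q X Y)) (KA.D p q X) (KA.D p q Y) (AMat p q s s')
      (KA.D_transpose X hX) (KA.D_transpose Y hY) (KA.A_comm X) (KA.A_comm Y)
      (KA.xVec_bracket X Y hX hY)) j
    simp only [Pi.sub_apply, Pi.zero_apply, Matrix.vecMul, Matrix.mulVec, dotProduct,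
      Fintype.sum_sum_type] at h ⊢
    linarith
  · intro a b
    simp only [kappaMap, Matrix.sub_apply, Matrix.mul_apply, Fintype.sum_sum_type]
    simp
    have h := KA.key_scal' (xVec p q s s' X) (xVec p q s s' Y) (AMat p q s s') (gMat p q s')
      KA.A_transpose KA.g_transpose KA.gA_comm
    simp only [Matrix.vecMul, Matrix.mulVec, dotProduct, Fintype.sum_sum_type] at h ⊢
    linarith
  · intro k a
    simp only [kappaMap, Matrix.sub_apply, Matrix.mul_apply, Fintype.sum_sum_type]
    simp
    have h := congrFun (KA.xVec_bracket (s := s) (s' := s') X Y hX hY) k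
    simp only [Pi.sub_apply, Matrix.vecMul, Matrix.mulVec, dotProduct,
      Fintype.sum_sum_type] at h ⊢
    linarith
  · intro k b
    simp only [kappaMap, Matrix.sub_apply, Matrix.mul_apply, Fintype.sum_sum_type]
    simp
    have h := congrFun (KA.key_col (xVec p q s s' X) (xVec p q s s' Y)
      (xVec p q s s' (hBracket p q X Y)) (KA.D p q X) (KA.D p q Y)
      (gMat p q s' * AMat p q s s') (KA.gA_commD X) (KA.gA_commD Y)
      (KA.xVec_bracket X Y hX hY)) k
    simp only [Pi.add_apply, Pi.neg_apply, Pi.zero_apply, Matrix.vecMul, Matrix.mulVec,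
      dotProduct, Fintype.sum_sum_type] at h ⊢
    linarith
  · intro b a
    simp only [kappaMap, Matrix.sub_apply, Matrix.mul_apply, Fintype.sum_sum_type]
    simp
    have h := KA.key_scal (xVec p q s s' X) (xVec p q s s' Y) (gMat p q s') KA.g_transpose
    simp only [Matrix.vecMul, Matrix.mulVec, dotProduct, Fintype.sum_sum_type] at h ⊢
    linarith
  · intro b j
    simp only [kappaMap, Matrix.sub_apply, Matrix.mul_apply, Fintype.sum_sum_type]
    simp
    have h := congrFun (KA.key_row (xVec p q s s' X) (xVec p q s s' Y)
      (xVec p q s s' (hBracket p q X Y)) (KA.D p q X) (KA.D p q Y) (gMat p q s')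
      (KA.D_transpose X hX) (KA.D_transpose Y hY) (KA.g_comm X) (KA.g_comm Y)
      (KA.xVec_bracket X Y hX hY)) j
    simp only [Pi.sub_apply, Pi.zero_apply, Matrix.vecMul, Matrix.mulVec, dotProduct,
      Fintype.sum_sum_type] at h ⊢
    linarith

end
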